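/- Every matrix in SL_d(ℂ) is a commutator: for all M ∈ SL_d(ℂ) there exist A, B ∈ GL_d(ℂ) with M = A B A^{-1} B^{-1}. -/

import Mathlib

open Matrix

/-!
Conjugate `M` to an upper triangular `T`; its diagonal entries `tᵢ` multiply to `det M = 1`.
Since `ℂˣ` is infinite there are distinct `bᵢ` and a permutation `π` with `b (π i) = bᵢ tᵢ`:
split `t` into minimal blocks of product `1`, take partial products around a cycle on each block,
and rescale the blocks so that their values do not collide. With `D = diag b`, the matrix `D T`
is upper triangular with the distinct diagonal entries `b (π i)`, so it is diagonalizable and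
conjugate to `diag (b ∘ π)`, hence to `D`. Then `D T = B D B⁻¹` says `T = D⁻¹ B D B⁻¹`.
-/

section PermRatio

open Finset

variable {G ι κ : Type*} [CommGroup G]

def IsPermRatio (t : ι → G) : Prop :=
  ∃ (b : ι → G) (π : Equiv.Perm ι), Function.Injective b ∧ ∀ i, b (π i) = b i * t i

theorem IsPermRatio.of_comp_equiv {t : ι → G} (e : κ ≃ ι) (h : IsPermRatio (t ∘ e)) :
    IsPermRatio t := by
  obtain ⟨b, π, hb, hπ⟩ := h
  refine ⟨b ∘ e.symm, e.permCongr π, hb.comp e.symm.injective, fun i => ?_⟩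
  simpa using hπ (e.symm i)

theorem IsPermRatio.sumElim [Infinite G] [Finite ι] [Finite κ] {t₁ : ι → G} {t₂ : κ → G}
    (h₁ : IsPermRatio t₁) (h₂ : IsPermRatio t₂) : IsPermRatio (Sum.elim t₁ t₂) := by
  obtain ⟨b₁, π₁, hb₁, hπ₁⟩ := h₁
  obtain ⟨b₂, π₂, hb₂, hπ₂⟩ := h₂
  obtain ⟨c, hc⟩ :=
    ((Set.finite_range b₂).image2 (· / ·) (Set.finite_range b₁)).exists_notMem
  refine ⟨Sum.elim (fun i => c * b₁ i) b₂, Equiv.sumCongr π₁ π₂,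
    (mul_right_injective c |>.comp hb₁).sumElim hb₂ fun i k hik => hc ?_, ?_⟩
  · exact ⟨b₂ k, ⟨k, rfl⟩, b₁ i, ⟨i, rfl⟩, by simp [← hik]⟩
  · rintro (i | k) <;> simp [hπ₁, hπ₂, mul_assoc]

theorem IsPermRatio.of_subtype [Infinite G] [Finite ι] {t : ι → G} (p : ι → Prop)
    [DecidablePred p] (h₁ : IsPermRatio fun i : {i // p i} => t i)
    (h₂ : IsPermRatio fun i : {i // ¬p i} => t i) : IsPermRatio t := by
  refine .of_comp_equiv (Equiv.sumCompl p) ?_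
  rw [show t ∘ Equiv.sumCompl p = Sum.elim (t ∘ (↑)) (t ∘ (↑)) by ext (i | i) <;> rfl]
  exact h₁.sumElim h₂

theorem isPermRatio_of_forall_prod_ne_one {n : ℕ} (t : Fin n → G) (hprod : ∏ i, t i = 1)
    (hmin : ∀ s : Finset (Fin n), s.Nonempty → s ≠ univ → ∏ i ∈ s, t i ≠ 1) :
    IsPermRatio t := by
  cases n with
  | zero => exact ⟨t, 1, fun i => i.elim0, fun i => i.elim0⟩
  | succ m =>
    refine ⟨fun k => ∏ l ∈ Iio k, t l, finRotate (m + 1), .of_lt_imp_ne ?_, fun i => ?_⟩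
    · intro j k hjk heq
      have hblock : ∏ l ∈ Iio k, t l = (∏ l ∈ Iio j, t l) * ∏ l ∈ Ico j k, t l := by
        rw [Iio_eq_Ico, Iio_eq_Ico, ← prod_union (Ico_disjoint_Ico_consecutive _ _ _),
          Ico_union_Ico_eq_Ico bot_le hjk.le]
      refine hmin (Ico j k) ⟨j, by simp [hjk]⟩
        (ne_of_mem_of_not_mem' (mem_univ k) (by simp)).symm ?_
      simpa [heq] using hblock
    · induction i using Fin.lastCases with
      | last =>
        rw [finRotate_last, prod_Iio_mul_eq_prod_Iic, ← Fin.top_eq_last]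
        simp [← bot_eq_zero, hprod]
      | cast j =>
        rw [finRotate_apply, Fin.coeSucc_eq_succ, prod_Iio_mul_eq_prod_Iic]
        congr 1

theorem isPermRatio_of_prod_eq_one [Infinite G] [Fintype ι] (t : ι → G)
    (hprod : ∏ i, t i = 1) : IsPermRatio t := by
  induction hn : Fintype.card ι using Nat.strong_induction_on generalizing ι with
  | _ n ih =>
    classical
    by_cases hsplit : ∃ s : Finset ι, s.Nonempty ∧ s ≠ univ ∧ ∏ i ∈ s, t i = 1
    · obtain ⟨s, ⟨i, hi⟩, hs, hprod_s⟩ := hsplit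
      obtain ⟨j, hj⟩ := not_forall.1 (mt eq_univ_iff_forall.2 hs)
      have hprod_s' : ∏ i : {i // i ∈ s}, t i = 1 := by
        rwa [← prod_subtype s fun _ => Iff.rfl]
      have hprod_sc : ∏ i : {i // i ∉ s}, t i = 1 := by
        rwa [← prod_mul_prod_compl s t, hprod_s, one_mul,
          prod_subtype sᶜ fun _ => mem_compl] at hprod
      exact .of_subtype (· ∈ s) (ih _ (hn ▸ Fintype.card_subtype_lt hj) _ hprod_s' rfl)
        (ih _ (hn ▸ Fintype.card_subtype_lt (not_not.2 hi)) _ hprod_sc rfl)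
    · push Not at hsplit
      set e := Fintype.equivFin ι
      refine .of_comp_equiv e.symm (isPermRatio_of_forall_prod_ne_one _ ?_ fun s hs hsu => ?_)
      · rwa [Function.comp_def, e.symm.prod_comp]
      · have := hsplit (s.map e.symm.toEmbedding) hs.map (by
          rwa [Ne, ← map_univ_equiv e.symm, map_inj])
        simpa [prod_map] using this

end PermRatio

instance DivisionRing.infinite_units {K : Type*} [DivisionRing K] [Infinite K] : Infinite Kˣ :=
  have : Infinite {a : K // a ≠ 0} := (Set.finite_singleton (0 : K)).infinite_compl.to_subtype
  .of_injective _ (unitsEquivNeZero (G₀ := K)).symm.injective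

section UnitsCommutator

variable {α : Type*} [Monoid α]

theorem exists_units_commutator_of_isConj_mul (u : αˣ) {x : α} (h : IsConj (u : α) (u * x)) :
    ∃ a b : αˣ, x = ↑(a * b * a⁻¹ * b⁻¹) := by
  obtain ⟨c, hc⟩ := h
  refine ⟨u⁻¹, c, ?_⟩
  calc x = ↑u⁻¹ * (↑u * x * ↑c * ↑c⁻¹) := by simp [mul_assoc]
    _ = ↑(u⁻¹ * c * u⁻¹⁻¹ * c⁻¹) := by rw [← hc.eq]; simp [mul_assoc]

theorem IsConj.exists_units_commutator {x y : α} (h : IsConj x y)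
    (hy : ∃ a b : αˣ, y = ↑(a * b * a⁻¹ * b⁻¹)) : ∃ a b : αˣ, x = ↑(a * b * a⁻¹ * b⁻¹) := by
  obtain ⟨c, hc⟩ := h
  obtain ⟨a, b, rfl⟩ := hy
  refine ⟨c⁻¹ * a * c, c⁻¹ * b * c, ?_⟩
  calc x = ↑c⁻¹ * (↑c * x) := by simp
    _ = ↑(c⁻¹ * (a * b * a⁻¹ * b⁻¹) * c) := by rw [hc.eq]; simp [mul_assoc]
    _ = _ := by congr 1; group

end UnitsCommutator

section Triangularization

open Module Submodule

variable {K V : Type*} [Field K] [IsAlgClosed K] [AddCommGroup V] [Module K V]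
  [FiniteDimensional K V]

theorem Module.End.exists_ne_zero_mapsTo_ker [Nontrivial V] (f : Module.End K V) :
    ∃ φ : Dual K V, φ ≠ 0 ∧ ∀ x ∈ LinearMap.ker φ, f x ∈ LinearMap.ker φ := by
  obtain ⟨μ, hμ⟩ := Module.End.exists_eigenvalue f.dualMap
  obtain ⟨φ, hφ⟩ := hμ.exists_hasEigenvector
  refine ⟨φ, hφ.2, fun x hx => ?_⟩
  have := congr($(hφ.apply_eq_smul) x)
  simp_all

theorem Module.End.exists_basis_apply_mem_span_image_Iic (f : Module.End K V) {n : ℕ}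
    (hn : finrank K V = n) : ∃ b : Basis (Fin n) K V, ∀ j, f (b j) ∈ span K (b '' Set.Iic j) := by
  induction n generalizing V with
  | zero => exact ⟨finBasisOfFinrankEq K V hn, fun j => j.elim0⟩
  | succ n ih =>
    have := nontrivial_of_finrank_eq_succ hn
    obtain ⟨φ, hφ, hN⟩ := f.exists_ne_zero_mapsTo_ker
    obtain ⟨y, hy⟩ : ∃ y, φ y ≠ 0 := by simpa [DFunLike.ne_iff] using hφ
    obtain ⟨b, hb⟩ :=
      ih (f.restrict hN) (by have := Dual.finrank_ker_add_one_of_ne_zero hφ; omega)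
    let B := Basis.mkFinSnoc b y
      (fun c x hx hcx => by simpa [LinearMap.mem_ker.mp hx, hy] using congr(φ $hcx))
      (fun z => ⟨-(φ z / φ y), by simp [field]⟩)
    refine ⟨B, fun j => ?_⟩
    induction j using Fin.lastCases with
    | last =>
      rw [← Fin.top_eq_last, Set.Iic_top, Set.image_univ, B.span_eq]
      trivial
    | cast j =>
      have := apply_mem_span_image_of_mem_span (LinearMap.ker φ).subtype (hb j)
      simp only [B, Basis.coe_mkFinSnoc, Fin.snoc_castSucc] at this ⊢
      refine span_mono ?_ this
      rintro _ ⟨_, ⟨k, hk, rfl⟩, rfl⟩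
      exact ⟨k.castSucc, by simpa using hk, by simp⟩

end Triangularization

namespace Matrix

theorem isConj_diagonal_comp_perm {R n : Type*} [Semiring R] [Fintype n] [DecidableEq n]
    (c : n → R) (σ : Equiv.Perm n) : IsConj (diagonal c) (diagonal (c ∘ σ)) := by
  refine ⟨⟨σ.permMatrix R, σ⁻¹.permMatrix R, by simp [← permMatrix_mul],
    by simp [← permMatrix_mul]⟩, ?_⟩
  ext i j
  rw [mul_diagonal, diagonal_mul]
  by_cases h : σ i = j <;> simp [PEquiv.toMatrix_apply, h]

theorem isConj_toMatrix_toLin' {R n : Type*} [CommRing R] [Fintype n] [DecidableEq n]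
    (b : Module.Basis n R (n → R)) (A : Matrix n n R) :
    IsConj A (LinearMap.toMatrix b b (toLin' A)) := by
  refine ⟨⟨b.toMatrix (Pi.basisFun R n), (Pi.basisFun R n).toMatrix b,
    b.toMatrix_mul_toMatrix_flip _, (Pi.basisFun R n).toMatrix_mul_toMatrix_flip _⟩, ?_⟩
  have := basis_toMatrix_mul_linearMap_toMatrix_mul_basis_toMatrix b (Pi.basisFun R n) b
    (Pi.basisFun R n) (toLin' A)
  rw [LinearMap.toMatrix_eq_toMatrix', LinearMap.toMatrix'_toLin'] at this
  simp only [SemiconjBy, ← this, Matrix.mul_assoc, Module.Basis.toMatrix_mul_toMatrix_flip,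
    Matrix.mul_one]

theorem exists_isConj_isUpperTriangular {K : Type*} [Field K] [IsAlgClosed K] {d : ℕ}
    (A : Matrix (Fin d) (Fin d) K) : ∃ T, IsConj A T ∧ T.IsUpperTriangular := by
  obtain ⟨b, hb⟩ :=
    Module.End.exists_basis_apply_mem_span_image_Iic (toLin' A) (Module.finrank_fin_fun K)
  refine ⟨_, isConj_toMatrix_toLin' b A, fun i j hji => ?_⟩
  rw [LinearMap.toMatrix_apply]
  exact Finsupp.notMem_support_iff.1 fun hi => hji.not_ge (b.mem_span_image.1 (hb j) hi)

variable {K n : Type*} [Field K] [Fintype n] [DecidableEq n]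

theorem isConj_diagonal_of_linearIndependent {A : Matrix n n K} {v : n → n → K} {c : n → K}
    (hv : LinearIndependent K v) (hAv : ∀ i, A *ᵥ v i = c i • v i) : IsConj A (diagonal c) := by
  obtain ⟨Q, hQ⟩ : IsUnit (of v)ᵀ := linearIndependent_cols_iff_isUnit.1 hv
  refine IsConj.symm ⟨Q, ?_⟩
  ext i j
  rw [hQ, mul_diagonal, mul_apply]
  simpa [mulVec, dotProduct, mul_comm] using (congrFun (hAv j) i).symm

variable [LinearOrder n]

theorem IsUpperTriangular.exists_mulVec_eq_smul {T : Matrix n n K} (hT : T.IsUpperTriangular)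
    (i : n) : ∃ v ≠ 0, T *ᵥ v = T i i • v := by
  obtain ⟨v, hv, hTv⟩ := exists_mulVec_eq_zero_iff.2 <|
    det_of_isUpperTriangular (hT.sub (blockTriangular_diagonal fun _ => T i i)) ▸
      Finset.prod_eq_zero (Finset.mem_univ i) (by simp)
  refine ⟨v, hv, ?_⟩
  rwa [← smul_one_eq_diagonal, sub_mulVec, smul_mulVec, one_mulVec, sub_eq_zero] at hTv

theorem IsUpperTriangular.isConj_diagonal {T : Matrix n n K} (hT : T.IsUpperTriangular)
    (hdiag : Function.Injective T.diag) : IsConj T (diagonal T.diag) := by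
  choose v hv0 hTv using hT.exists_mulVec_eq_smul
  refine isConj_diagonal_of_linearIndependent ?_ hTv
  exact Module.End.eigenvectors_linearIndependent' (toLin' T) T.diag hdiag v fun i =>
    ⟨Module.End.mem_eigenspace_iff.2 (by simpa using hTv i), hv0 i⟩

end Matrix

theorem shoda_commutator_general (d : ℕ)
    (M : Matrix.SpecialLinearGroup (Fin d) ℂ) :
    ∃ A B : GL (Fin d) ℂ,
      (M : Matrix (Fin d) (Fin d) ℂ) =
        ((A * B * A⁻¹ * B⁻¹ : GL (Fin d) ℂ) : Matrix (Fin d) (Fin d) ℂ) := by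
  obtain ⟨T, hMT, hT⟩ := exists_isConj_isUpperTriangular (M : Matrix (Fin d) (Fin d) ℂ)
  have hdet : ∏ i, T i i = 1 := by
    rw [← det_of_isUpperTriangular hT, ← M.2]
    exact (isConj_iff_eq.1 (detMonoidHom.map_isConj hMT)).symm
  let t i : ℂˣ := .mk0 (T i i) fun h =>
    one_ne_zero (hdet ▸ Finset.prod_eq_zero (f := fun i => T i i) (Finset.mem_univ i) h)
  obtain ⟨b, π, hb, hbπ⟩ := isPermRatio_of_prod_eq_one t (Units.ext (by simpa [t] using hdet))
  let D : GL (Fin d) ℂ := ⟨diagonal fun i => b i, diagonal fun i => ↑(b i)⁻¹, by simp, by simp⟩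
  have hDT : IsConj ((D : Matrix _ _ ℂ) * T) (diagonal fun i => (b (π i) : ℂ)) := by
    have hdiag : ((D : Matrix _ _ ℂ) * T).diag = fun i => (b (π i) : ℂ) := by
      ext i
      simp [D, hbπ, t]
    rw [← hdiag]
    exact IsUpperTriangular.isConj_diagonal ((blockTriangular_diagonal _).mul hT)
      (hdiag ▸ (Units.val_injective.comp hb).comp π.injective)
  exact hMT.exists_units_commutator <| exists_units_commutator_of_isConj_mul D <|
    (isConj_diagonal_comp_perm _ π).trans hDT.symm

/-- Shoda's theorem: every matrix in `SL_d(ℂ)` is a commutator of elements of `GL_d(ℂ)`. -/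
theorem shoda_commutator (d : ℕ) (hd : 1 ≤ d)
    (M : Matrix.SpecialLinearGroup (Fin d) ℂ) :
    ∃ A B : GL (Fin d) ℂ,
      (M : Matrix (Fin d) (Fin d) ℂ) =
        ((A * B * A⁻¹ * B⁻¹ : GL (Fin d) ℂ) : Matrix (Fin d) (Fin d) ℂ) :=
  shoda_commutator_general d M
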